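/- arXiv:1711.05083 — 2 statements merged into one kernel-verified Lean document; each statement's English description precedes it below -/
import Mathlib

section
/- Let Ω ⊂ ℝ^N be open and bounded with c ≤ z ≤ 1 on Ω for some c > 0, where z(x) = ∫_Ω η(x−y) dy, and let η ∈ C²_c(ℝ^N; ℝ₊) ∩ C¹. Then for every ρ ∈ L¹(Ω;ℝ), the gradient of the boundary-adapted convolution satisfies ‖∇(ρ ∗_Ω η)‖_{L^∞(Ω;ℝ^N)} ≤ ( ‖∇η‖_{L^∞}/c + ‖∇η‖_{L¹} ‖η‖_{L^∞}/c² ) ‖ρ‖_{L¹(Ω)}, using the identity ∇(ρ ∗_Ω η) = (1/z)((ρ 1_Ω) ∗ ∇η) − ((1_Ω ∗ ∇η)/z²)((ρ 1_Ω) ∗ η). -/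
/-!
With `z = 1_Ω ∗ η` and `g = (ρ 1_Ω) ∗ η`, both convolutions of a locally integrable function with
a compactly supported `C¹` kernel, differentiation falls on the kernel: `∇z = 1_Ω ∗ ∇η` and
`∇g = (ρ 1_Ω) ∗ ∇η`. The quotient rule gives `∇(g / z) = ∇g / z - g ∇z / z²`, and each factor is
bounded by the `L¹ × L^∞` Young inequality: `‖∇g‖ ≤ ‖∇η‖_∞ ‖ρ‖_{L¹(Ω)}`,
`|g| ≤ ‖η‖_∞ ‖ρ‖_{L¹(Ω)}`, `‖∇z‖ ≤ ‖∇η‖_{L¹}`, while `z ≥ c`.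
-/

open MeasureTheory Set ContinuousLinearMap
open scoped Convolution

section ConvolutionBounds

variable {G E E' F : Type*} [NormedAddCommGroup G] [MeasurableSpace G] {μ : Measure G}
  [NormedAddCommGroup E] [NormedAddCommGroup E'] [NormedAddCommGroup F]
  [NormedSpace ℝ E] [NormedSpace ℝ E'] [NormedSpace ℝ F]
  {L : E →L[ℝ] E' →L[ℝ] F} {f : G → E} {g : G → E'}

theorem norm_convolution_le_of_norm_le_right (hL : ∀ a b, ‖L a b‖ ≤ ‖a‖ * ‖b‖)
    (hf : Integrable f μ) {M : ℝ} (hg : ∀ t, ‖g t‖ ≤ M) (x : G) :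
    ‖(f ⋆[L, μ] g) x‖ ≤ M * ∫ t, ‖f t‖ ∂μ := by
  calc ‖(f ⋆[L, μ] g) x‖ ≤ ∫ t, ‖L (f t) (g (x - t))‖ ∂μ := norm_integral_le_integral_norm _
    _ ≤ ∫ t, M * ‖f t‖ ∂μ := by
        refine integral_mono_of_nonneg (.of_forall fun _ => norm_nonneg _)
          (hf.norm.const_mul M) (.of_forall fun t => ?_)
        calc ‖L (f t) (g (x - t))‖ ≤ ‖f t‖ * ‖g (x - t)‖ := hL _ _
          _ ≤ M * ‖f t‖ := by rw [mul_comm]; gcongr; exact hg _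
    _ = M * ∫ t, ‖f t‖ ∂μ := integral_const_mul M _

theorem norm_convolution_le_of_norm_le_left [MeasurableAdd G] [MeasurableNeg G]
    [μ.IsAddLeftInvariant] [μ.IsNegInvariant] (hL : ∀ a b, ‖L a b‖ ≤ ‖a‖ * ‖b‖)
    {C : ℝ} (hf : ∀ t, ‖f t‖ ≤ C) (hg : Integrable g μ) (x : G) :
    ‖(f ⋆[L, μ] g) x‖ ≤ C * ∫ t, ‖g t‖ ∂μ := by
  calc ‖(f ⋆[L, μ] g) x‖ ≤ ∫ t, ‖L (f t) (g (x - t))‖ ∂μ := norm_integral_le_integral_norm _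
    _ ≤ ∫ t, C * ‖g (x - t)‖ ∂μ := by
        refine integral_mono_of_nonneg (.of_forall fun _ => norm_nonneg _)
          ((hg.comp_sub_left x).norm.const_mul C) (.of_forall fun t => ?_)
        calc ‖L (f t) (g (x - t))‖ ≤ ‖f t‖ * ‖g (x - t)‖ := hL _ _
          _ ≤ C * ‖g (x - t)‖ := by gcongr; exact hf _
    _ = C * ∫ t, ‖g t‖ ∂μ := by
        rw [integral_const_mul, integral_sub_left_eq_self (fun t => ‖g t‖) μ x]

end ConvolutionBounds

theorem norm_lsmul_apply_apply_le (a b : ℝ) : ‖lsmul ℝ ℝ a b‖ ≤ ‖a‖ * ‖b‖ :=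
  (norm_smul a b).le

theorem norm_precompR_lsmul_apply_apply_le {G : Type*} [NormedAddCommGroup G] [NormedSpace ℝ G]
    (a : ℝ) (v : G →L[ℝ] ℝ) :
    ‖(lsmul ℝ ℝ).precompR G a v‖ ≤ ‖a‖ * ‖v‖ := by
  have : (lsmul ℝ ℝ).precompR G a v = a • v := by ext; simp
  rw [this, norm_smul]

theorem setIntegral_mul_eq_convolution_indicator {G : Type*} [AddGroup G] [MeasurableSpace G]
    {μ : Measure G} {Ω : Set G} (hΩ : MeasurableSet Ω) (ρ η : G → ℝ) (x : G) :
    ∫ y in Ω, ρ y * η (x - y) ∂μ = (Ω.indicator ρ ⋆[lsmul ℝ ℝ, μ] η) x := by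
  rw [convolution_lsmul, ← integral_indicator hΩ]
  congr 1 with y
  simp only [smul_eq_mul, indicator_mul_left]

theorem hasFDerivAt_inv_mul {E : Type*} [NormedAddCommGroup E] [NormedSpace ℝ E]
    {Z g : E → ℝ} {Z' g' : E →L[ℝ] ℝ} {x : E} (hZ : HasFDerivAt Z Z' x) (hg : HasFDerivAt g g' x)
    (hx : Z x ≠ 0) :
    HasFDerivAt (fun ξ => (Z ξ)⁻¹ * g ξ) ((Z x)⁻¹ • g' - (g x / Z x ^ 2) • Z') x := by
  have hinv : HasFDerivAt (fun ξ => (Z ξ)⁻¹) (-(Z x ^ 2)⁻¹ • Z') x :=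
    (hasDerivAt_inv hx).comp_hasFDerivAt x hZ
  refine (hinv.fun_mul hg).congr_fderiv ?_
  ext v
  simp only [add_apply, smul_apply, smul_eq_mul, sub_apply]
  ring

theorem norm_inv_smul_sub_div_sq_smul_le {E : Type*} [NormedAddCommGroup E] [NormedSpace ℝ E]
    {c z a A B C : ℝ} {g' Z' : E} (hc : 0 < c) (hz : c ≤ z)
    (hg' : ‖g'‖ ≤ A) (ha : |a| ≤ B) (hZ' : ‖Z'‖ ≤ C) :
    ‖z⁻¹ • g' - (a / z ^ 2) • Z'‖ ≤ A / c + C * B / c ^ 2 := by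
  have hz0 : 0 < z := hc.trans_le hz
  calc ‖z⁻¹ • g' - (a / z ^ 2) • Z'‖ ≤ ‖g'‖ / z + ‖Z'‖ * |a| / z ^ 2 := by
        refine (norm_sub_le _ _).trans_eq ?_
        rw [norm_smul, norm_smul, Real.norm_eq_abs, Real.norm_eq_abs, abs_inv, abs_div,
          abs_of_pos hz0, abs_of_pos (pow_pos hz0 2)]
        ring
    _ ≤ A / c + C * B / c ^ 2 := by
        have hA : 0 ≤ A := (norm_nonneg _).trans hg'
        have hB : 0 ≤ B := (abs_nonneg _).trans ha
        have hC : 0 ≤ C := (norm_nonneg _).trans hZ'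
        gcongr

theorem norm_le_ciSup_norm_of_hasCompactSupport {X E : Type*} [TopologicalSpace X]
    [NormedAddCommGroup E] {f : X → E} (hf : Continuous f) (hfs : HasCompactSupport f) (x : X) :
    ‖f x‖ ≤ ⨆ ξ, ‖f ξ‖ :=
  le_ciSup (hf.norm.bddAbove_range_of_hasCompactSupport hfs.norm) x

theorem stmt4_general (N : ℕ) (Ω : Set (EuclideanSpace ℝ (Fin N)))
    (hΩopen : IsOpen Ω)
    (η : EuclideanSpace ℝ (Fin N) → ℝ)
    (hη : ContDiff ℝ 2 η) (hηsupp : HasCompactSupport η)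
    (c : ℝ) (hc : 0 < c)
    (hz : ∀ x ∈ Ω, c ≤ (∫ y in Ω, η (x - y)) ∧ (∫ y in Ω, η (x - y)) ≤ 1)
    (ρ : EuclideanSpace ℝ (Fin N) → ℝ)
    (hρ : IntegrableOn ρ Ω) :
    ∀ x ∈ Ω,
      ‖fderiv ℝ
        (fun ξ => (1 / ∫ y in Ω, η (ξ - y)) * ∫ y in Ω, ρ y * η (ξ - y)) x‖ ≤
      ((⨆ ξ, ‖fderiv ℝ η ξ‖) / c +
        (∫ ξ, ‖fderiv ℝ η ξ‖) * (⨆ ξ, |η ξ|) / c ^ 2) * ∫ y in Ω, |ρ y| := by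
  intro x hx
  have hΩ : MeasurableSet Ω := hΩopen.measurableSet
  set z := Ω.indicator (fun _ => (1 : ℝ)) ⋆[lsmul ℝ ℝ, volume] η
  set g := Ω.indicator ρ ⋆[lsmul ℝ ℝ, volume] η
  have hz_eq (ξ) : ∫ y in Ω, η (ξ - y) = z ξ := by
    simpa only [one_mul] using setIntegral_mul_eq_convolution_indicator hΩ (fun _ => 1) η ξ
  have hfun : (fun ξ => (1 / ∫ y in Ω, η (ξ - y)) * ∫ y in Ω, ρ y * η (ξ - y)) =
      fun ξ => (z ξ)⁻¹ * g ξ := by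
    funext ξ
    rw [one_div, hz_eq, setIntegral_mul_eq_convolution_indicator hΩ]
  have hcz : c ≤ z x := hz_eq x ▸ (hz x hx).1
  have hη₁ : ContDiff ℝ 1 η := hη.of_le one_le_two
  have hρΩ : Integrable (Ω.indicator ρ) := hρ.integrable_indicator hΩ
  have hz' := hηsupp.hasFDerivAt_convolution_right (lsmul ℝ ℝ)
    ((locallyIntegrable_const (μ := volume) (1 : ℝ)).indicator hΩ) hη₁ x
  have hg' := hηsupp.hasFDerivAt_convolution_right (lsmul ℝ ℝ) hρΩ.locallyIntegrable hη₁ x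
  have hdη : Continuous (fderiv ℝ η) := hη.continuous_fderiv two_ne_zero
  have hρ_norm : ∫ t, ‖Ω.indicator ρ t‖ = ∫ y in Ω, |ρ y| := by
    simp_rw [norm_indicator_eq_indicator_norm]
    exact integral_indicator hΩ
  rw [hfun, (hasFDerivAt_inv_mul hz' hg' (hc.trans_le hcz).ne').fderiv, ← hρ_norm]
  refine (norm_inv_smul_sub_div_sq_smul_le hc hcz
    (norm_convolution_le_of_norm_le_right norm_precompR_lsmul_apply_apply_le hρΩ
      (norm_le_ciSup_norm_of_hasCompactSupport hdη (hηsupp.fderiv (𝕜 := ℝ))) x)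
    (norm_convolution_le_of_norm_le_right norm_lsmul_apply_apply_le hρΩ
      (norm_le_ciSup_norm_of_hasCompactSupport hη.continuous hηsupp) x)
    (norm_convolution_le_of_norm_le_left norm_precompR_lsmul_apply_apply_le
      (fun _ => norm_indicator_le_norm_self _ _)
      (hdη.integrable_of_hasCompactSupport (hηsupp.fderiv (𝕜 := ℝ))) x)).trans_eq ?_
  simp only [norm_one, one_mul, Real.norm_eq_abs]
  ring

theorem stmt4 (N : ℕ) (Ω : Set (EuclideanSpace ℝ (Fin N)))
    (hΩopen : IsOpen Ω) (hΩbdd : Bornology.IsBounded Ω)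
    (η : EuclideanSpace ℝ (Fin N) → ℝ)
    (hη : ContDiff ℝ 2 η) (hηsupp : HasCompactSupport η) (hηnn : ∀ x, 0 ≤ η x)
    (c : ℝ) (hc : 0 < c)
    (hz : ∀ x ∈ Ω, c ≤ (∫ y in Ω, η (x - y)) ∧ (∫ y in Ω, η (x - y)) ≤ 1)
    (ρ : EuclideanSpace ℝ (Fin N) → ℝ)
    (hρ : IntegrableOn ρ Ω) :
    ∀ x ∈ Ω,
      ‖fderiv ℝ
        (fun ξ => (1 / ∫ y in Ω, η (ξ - y)) * ∫ y in Ω, ρ y * η (ξ - y)) x‖ ≤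
      ((⨆ ξ, ‖fderiv ℝ η ξ‖) / c +
        (∫ ξ, ‖fderiv ℝ η ξ‖) * (⨆ ξ, |η ξ|) / c ^ 2) * ∫ y in Ω, |ρ y| :=
  stmt4_general N Ω hΩopen η hη hηsupp c hc hz ρ hρ
end

section
/- Gronwall-type closing estimate: if functions b, c : I → ℝ₊ are nondecreasing with b(0) > 0 and a nonnegative function φ satisfies φ(t) ≤ b(t)∫₀ᵗ φ(s) ds + c(t) Ψ(t) with Ψ(t) = ∫₀ᵗ ψ(s) ds for a nonnegative ψ, then φ(t) ≤ c(t) (b(t)/b(0)) e^{t b(t)} Ψ(t), using the inequality e^{−∫₀ᵗ b(τ)dτ} + b(t) ∫₀ᵗ e^{−∫₀ˢ b(τ)dτ} ds ≤ b(t)/b(0). -/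
open MeasureTheory Set intervalIntegral

theorem stmt19 (b c φ ψ : ℝ → ℝ)
    (hb : MonotoneOn b (Ici (0:ℝ))) (hc : MonotoneOn c (Ici (0:ℝ)))
    (hbnn : ∀ t, 0 ≤ t → 0 ≤ b t) (hcnn : ∀ t, 0 ≤ t → 0 ≤ c t)
    (hb0 : 0 < b 0)
    (hφnn : ∀ t, 0 ≤ t → 0 ≤ φ t) (hψnn : ∀ t, 0 ≤ t → 0 ≤ ψ t)
    (hφint : ∀ t, 0 ≤ t → IntervalIntegrable φ MeasureTheory.volume 0 t)
    (hψint : ∀ t, 0 ≤ t → IntervalIntegrable ψ MeasureTheory.volume 0 t)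
    (hineq : ∀ t, 0 ≤ t →
      φ t ≤ b t * (∫ s in (0:ℝ)..t, φ s) + c t * ∫ s in (0:ℝ)..t, ψ s) :
    ∀ t, 0 ≤ t →
      φ t ≤ c t * (b t / b 0) * Real.exp (t * b t) * ∫ s in (0:ℝ)..t, ψ s := by
  intro t ht
  set B := b t with hB
  set Ψ : ℝ := ∫ s in (0:ℝ)..t, ψ s with hΨ
  set K : ℝ := c t * Ψ with hK
  have hBpos : 0 < B := lt_of_lt_of_le hb0 (hb (mem_Ici.2 le_rfl) (mem_Ici.2 ht) ht)
  have hΨnn : 0 ≤ Ψ := intervalIntegral.integral_nonneg ht (fun s hs => hψnn s hs.1)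
  have hKnn : 0 ≤ K := mul_nonneg (hcnn t ht) hΨnn
  -- primitive, projection, extended primitive
  set P : ℝ → ℝ := fun s => ∫ u in (0:ℝ)..s, φ u with hP
  set proj : ℝ → ℝ := fun s => max 0 (min s t) with hproj
  have hprojmem : ∀ s, proj s ∈ Icc (0:ℝ) t := fun s =>
    ⟨le_max_left _ _, max_le ht (min_le_right _ _)⟩
  have hprojeq : ∀ s ∈ Icc (0:ℝ) t, proj s = s := by
    intro s hs
    simp [hproj, min_eq_left hs.2, max_eq_right hs.1]
  have hPcont : ContinuousOn P (Icc (0:ℝ) t) := by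
    have := intervalIntegral.continuousOn_primitive_interval' (μ := volume) (f := φ)
      (a := 0) (hφint t ht) left_mem_uIcc
    simpa [hP, uIcc_of_le ht] using this
  set Fc : ℝ → ℝ := fun s => P (proj s) with hFc
  have hFccont : Continuous Fc := by
    apply hPcont.comp_continuous
    · exact continuous_const.max (continuous_id.min continuous_const)
    · exact hprojmem
  have hPnn : ∀ s ∈ Icc (0:ℝ) t, 0 ≤ P s := by
    intro s hs
    exact intervalIntegral.integral_nonneg hs.1 (fun u hu => hφnn u hu.1)
  have hFcnn : ∀ s, 0 ≤ Fc s := fun s => hPnn _ (hprojmem s)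
  set g : ℝ → ℝ := fun s => B * Fc s + K with hg
  have hgcont : Continuous g := (continuous_const.mul hFccont).add continuous_const
  have hgnn : ∀ s, 0 ≤ g s := fun s =>
    add_nonneg (mul_nonneg hBpos.le (hFcnn s)) hKnn
  set G : ℝ → ℝ := fun s => ∫ u in (0:ℝ)..s, g u with hG
  have hGderiv : ∀ x : ℝ, HasDerivAt G (g x) x := by
    intro x
    exact intervalIntegral.integral_hasDerivAt_right
      (hgcont.intervalIntegrable _ _)
      (hgcont.stronglyMeasurableAtFilter _ _) hgcont.continuousAt
  have hGcont : Continuous G := by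
    rw [continuous_iff_continuousAt]; exact fun x => (hGderiv x).continuousAt
  have hGnn : ∀ s, 0 ≤ s → 0 ≤ G s := fun s hs =>
    intervalIntegral.integral_nonneg hs (fun u _ => hgnn u)
  -- Ψ is monotone: ∫₀ˢ ψ ≤ Ψ for s ∈ [0,t]
  have hΨmono : ∀ s ∈ Icc (0:ℝ) t, (∫ u in (0:ℝ)..s, ψ u) ≤ Ψ := by
    intro s hs
    have h2 : IntervalIntegrable ψ volume s t :=
      (hψint t ht).mono_set (uIcc_subset_uIcc
        (by simp [uIcc_of_le ht]; exact hs) (by simp [uIcc_of_le ht, ht]))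
    have := intervalIntegral.integral_add_adjacent_intervals (hψint s hs.1) h2
    have hnn : 0 ≤ ∫ u in s..t, ψ u :=
      intervalIntegral.integral_nonneg hs.2 (fun u hu => hψnn u (hs.1.trans hu.1))
    rw [hΨ, ← this]; linarith
  -- key pointwise bound: φ s ≤ g s on [0,t]
  have hkey : ∀ s ∈ Icc (0:ℝ) t, φ s ≤ B * P s + K := by
    intro s hs
    have h1 := hineq s hs.1
    have h2 : b s * P s ≤ B * P s :=
      mul_le_mul_of_nonneg_right (hb (mem_Ici.2 hs.1) (mem_Ici.2 ht) hs.2) (hPnn s hs)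
    have h3 : c s * (∫ u in (0:ℝ)..s, ψ u) ≤ K := by
      rw [hK]
      exact mul_le_mul (hc (mem_Ici.2 hs.1) (mem_Ici.2 ht) hs.2) (hΨmono s hs)
        (intervalIntegral.integral_nonneg hs.1 (fun u hu => hψnn u hu.1)) (hcnn t ht)
    calc φ s ≤ b s * P s + c s * (∫ u in (0:ℝ)..s, ψ u) := h1
      _ ≤ B * P s + K := add_le_add h2 h3
  have hkeyg : ∀ s ∈ Icc (0:ℝ) t, φ s ≤ g s := by
    intro s hs
    simpa [hg, hFc, hprojeq s hs] using hkey s hs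
  -- P ≤ G on [0,t]
  have hPG : ∀ s ∈ Icc (0:ℝ) t, P s ≤ G s := by
    intro s hs
    apply intervalIntegral.integral_mono_on hs.1 (hφint s hs.1)
      (hgcont.intervalIntegrable _ _)
    intro u hu
    exact hkeyg u ⟨hu.1, hu.2.trans hs.2⟩
  -- Gronwall
  have hgw := norm_le_gronwallBound_of_norm_deriv_right_le (f := G) (f' := g)
    (δ := 0) (K := B) (ε := K) (a := 0) (b := t) hGcont.continuousOn
    (fun x _ => (hGderiv x).hasDerivWithinAt)
    (by simp [hG]) ?_
  swap
  · intro x hx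
    rw [Real.norm_of_nonneg (hgnn x), Real.norm_of_nonneg (hGnn x hx.1)]
    have : Fc x ≤ G x := by
      show P (proj x) ≤ G x
      rw [hprojeq x ⟨hx.1, hx.2.le⟩]
      exact hPG x ⟨hx.1, hx.2.le⟩
    have := mul_le_mul_of_nonneg_left this hBpos.le
    simp only [hg]; linarith
  have hGt : G t ≤ K / B * (Real.exp (B * t) - 1) := by
    have := hgw t ⟨ht, le_rfl⟩
    rw [Real.norm_of_nonneg (hGnn t ht), gronwallBound_of_K_ne_0 hBpos.ne'] at this
    simpa using this
  -- conclude
  have hφt : φ t ≤ K * Real.exp (B * t) := by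
    have h1 : φ t ≤ B * P t + K := hkey t ⟨ht, le_rfl⟩
    have h2 : B * P t ≤ B * G t := mul_le_mul_of_nonneg_left (hPG t ⟨ht, le_rfl⟩) hBpos.le
    have h3 : B * G t ≤ B * (K / B * (Real.exp (B * t) - 1)) :=
      mul_le_mul_of_nonneg_left hGt hBpos.le
    have h4 : B * (K / B * (Real.exp (B * t) - 1)) = K * (Real.exp (B * t) - 1) := by
      field_simp
    linarith
  have hdiv : 1 ≤ B / b 0 := (one_le_div hb0).2 (hb (mem_Ici.2 le_rfl) (mem_Ici.2 ht) ht)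
  have hexp : 0 < Real.exp (B * t) := Real.exp_pos _
  calc φ t ≤ K * Real.exp (B * t) := hφt
    _ ≤ K * (B / b 0) * Real.exp (B * t) := by nlinarith [mul_le_mul_of_nonneg_left hdiv (mul_nonneg hKnn hexp.le)]
    _ = c t * (B / b 0) * Real.exp (t * B) * Ψ := by rw [mul_comm B t]; ring
end
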